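/- arXiv:1104.1054 — 4 statements merged into one kernel-verified Lean document; each statement's English description precedes it below -/
import Mathlib

section
/- The Lenz arrow is compatible with right multiplication: if a → b and ac ≠ 0 and bc ≠ 0, then ac → bc. -/
/-- An inverse semigroup with zero whose natural partial order has binary meets
(an inverse ∧-semigroup with zero). The order `≤` is required to coincide with
the natural partial order: `a ≤ b ↔ a = b * (a⁻¹ * a)`. -/
class InverseMeetSemigroup (S : Type*) extends Semigroup S, Zero S, Inv S, SemilatticeInf S where
  mul_inv_mul : ∀ a : S, a * a⁻¹ * a = a
  inv_mul_inv : ∀ a : S, a⁻¹ * a * a⁻¹ = a⁻¹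
  idem_comm : ∀ e f : S, e * e = e → f * f = f → e * f = f * e
  zero_mul : ∀ a : S, (0 : S) * a = 0
  mul_zero : ∀ a : S, a * (0 : S) = 0
  le_iff : ∀ a b : S, a ≤ b ↔ a = b * (a⁻¹ * a)

variable {S : Type*} [InverseMeetSemigroup S]

/-- The Lenz arrow relation: `a → b` iff every nonzero `x ≤ a` satisfies `x ⊓ b ≠ 0`. -/
def LenzArrow (a b : S) : Prop := ∀ x : S, x ≠ 0 → x ≤ a → x ⊓ b ≠ 0

/-!
If `x ≤ a * c` then `x = (x * c⁻¹) * c` with `x * c⁻¹ ≤ a`, so the Lenz arrow `a → b` yields a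
nonzero `z ≤ x * c⁻¹` below `b`. Right multiplication by `c` is monotone and, on elements below
`x * c⁻¹`, undone by `c⁻¹`; hence `z * c` is a nonzero common lower bound of `x` and `b * c`.
-/

namespace InverseMeetSemigroup

variable {a b c e f x y : S}

theorem isIdempotentElem_inv_mul (a : S) : IsIdempotentElem (a⁻¹ * a) := by
  rw [IsIdempotentElem, ← mul_assoc, inv_mul_inv]

theorem isIdempotentElem_mul_inv (a : S) : IsIdempotentElem (a * a⁻¹) := by
  rw [IsIdempotentElem, ← mul_assoc, mul_inv_mul]

theorem mul_comm_of_isIdempotentElem (he : IsIdempotentElem e) (hf : IsIdempotentElem f) :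
    e * f = f * e :=
  idem_comm e f he hf

theorem mul_inv_mul_assoc (a : S) : a * (a⁻¹ * a) = a := by
  rw [← mul_assoc, mul_inv_mul]

theorem inv_mul_inv_assoc (a : S) : a⁻¹ * (a * a⁻¹) = a⁻¹ := by
  rw [← mul_assoc, inv_mul_inv]

theorem mul_inv_mul_cancel_left (a x : S) : a * (a⁻¹ * (a * x)) = a * x := by
  rw [← mul_assoc a⁻¹, ← mul_assoc, mul_inv_mul_assoc]

theorem inv_mul_inv_cancel_left (a x : S) : a⁻¹ * (a * (a⁻¹ * x)) = a⁻¹ * x := by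
  rw [← mul_assoc a, ← mul_assoc, inv_mul_inv_assoc]

theorem eq_inv_of_mul_mul_eq (hab : a * b * a = a) (hba : b * a * b = b) : b = a⁻¹ := by
  have hba_idem : IsIdempotentElem (b * a) := by
    rw [IsIdempotentElem, ← mul_assoc, hba]
  have hab_idem : IsIdempotentElem (a * b) := by
    rw [IsIdempotentElem, ← mul_assoc, hab]
  calc b = b * a * (a⁻¹ * a) * b := by rw [mul_assoc b a, mul_inv_mul_assoc, hba]
    _ = a⁻¹ * (a * a⁻¹) * (a * b) := by
        rw [mul_comm_of_isIdempotentElem hba_idem (isIdempotentElem_inv_mul a)]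
        simp only [mul_assoc, inv_mul_inv_cancel_left]; rw [← mul_assoc b, hba]
    _ = a⁻¹ * (a * b * a) * a⁻¹ := by
        rw [mul_assoc a⁻¹, ← mul_comm_of_isIdempotentElem hab_idem (isIdempotentElem_mul_inv a)]
        simp only [mul_assoc]
    _ = a⁻¹ := by rw [hab, inv_mul_inv]

theorem inv_inv (a : S) : a⁻¹⁻¹ = a :=
  (eq_inv_of_mul_mul_eq (inv_mul_inv a) (mul_inv_mul a)).symm

theorem mul_inv_rev (a b : S) : (a * b)⁻¹ = b⁻¹ * a⁻¹ := by
  have hcomm := mul_comm_of_isIdempotentElem (isIdempotentElem_mul_inv b)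
    (isIdempotentElem_inv_mul a)
  refine (eq_inv_of_mul_mul_eq ?_ ?_).symm
  · calc a * b * (b⁻¹ * a⁻¹) * (a * b) = a * ((b * b⁻¹) * (a⁻¹ * a)) * b := by
          simp only [mul_assoc]
      _ = a * b := by
          rw [hcomm]; simp only [mul_assoc, mul_inv_mul_assoc, mul_inv_mul_cancel_left]
  · calc b⁻¹ * a⁻¹ * (a * b) * (b⁻¹ * a⁻¹) = b⁻¹ * ((a⁻¹ * a) * (b * b⁻¹)) * a⁻¹ := by
          simp only [mul_assoc]
      _ = b⁻¹ * a⁻¹ := by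
          rw [← hcomm]; simp only [mul_assoc, inv_mul_inv_assoc, inv_mul_inv_cancel_left]

theorem inv_eq_self_of_isIdempotentElem (he : IsIdempotentElem e) : e⁻¹ = e :=
  (eq_inv_of_mul_mul_eq (by rw [he.eq, he.eq]) (by rw [he.eq, he.eq])).symm

theorem mul_le_self_of_isIdempotentElem (y : S) (he : IsIdempotentElem e) : y * e ≤ y := by
  rw [le_iff, mul_inv_rev, inv_eq_self_of_isIdempotentElem he]
  calc y * e = y * ((y⁻¹ * y) * e * e) := by
        rw [mul_assoc _ e, he.eq, ← mul_assoc, ← mul_assoc, mul_inv_mul]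
    _ = y * (e * y⁻¹ * (y * e)) := by
        rw [mul_comm_of_isIdempotentElem (isIdempotentElem_inv_mul y) he]; simp only [mul_assoc]

theorem mul_mul_inv_le (a c : S) : a * c * c⁻¹ ≤ a := by
  rw [mul_assoc]; exact mul_le_self_of_isIdempotentElem a (isIdempotentElem_mul_inv c)

theorem isIdempotentElem_inv_mul_mul (he : IsIdempotentElem e) (c : S) :
    IsIdempotentElem (c⁻¹ * e * c) := by
  calc c⁻¹ * e * c * (c⁻¹ * e * c) = c⁻¹ * (e * (c * c⁻¹) * e) * c := by simp only [mul_assoc]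
    _ = c⁻¹ * e * c := by
        rw [mul_comm_of_isIdempotentElem he (isIdempotentElem_mul_inv c), mul_assoc _ e, he.eq]
        simp only [mul_assoc, inv_mul_inv_cancel_left]

theorem mul_le_mul_right (h : x ≤ y) (c : S) : x * c ≤ y * c := by
  have he := isIdempotentElem_inv_mul x
  calc x * c = y * (x⁻¹ * x) * (c * c⁻¹ * c) := by rw [← (le_iff x y).1 h, mul_inv_mul]
    _ = y * ((c * c⁻¹) * (x⁻¹ * x)) * c := by
        rw [← mul_comm_of_isIdempotentElem he (isIdempotentElem_mul_inv c)]
        simp only [mul_assoc]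
    _ = y * c * (c⁻¹ * (x⁻¹ * x) * c) := by simp only [mul_assoc]
    _ ≤ y * c := mul_le_self_of_isIdempotentElem _ (isIdempotentElem_inv_mul_mul he c)

theorem mul_inv_mul_of_le_mul (h : x ≤ y * c) : x * c⁻¹ * c = x := by
  obtain ⟨e, he, rfl⟩ : ∃ e, IsIdempotentElem e ∧ x = y * c * e :=
    ⟨_, isIdempotentElem_inv_mul x, (le_iff x _).1 h⟩
  calc y * c * e * c⁻¹ * c = y * c * (e * (c⁻¹ * c)) := by simp only [mul_assoc]
    _ = y * c * e := by
        rw [mul_comm_of_isIdempotentElem he (isIdempotentElem_inv_mul c)]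
        simp only [mul_assoc, mul_inv_mul_cancel_left]

theorem mul_mul_inv_of_le_mul_inv (h : x ≤ y * c⁻¹) : x * c * c⁻¹ = x := by
  simpa only [inv_inv] using mul_inv_mul_of_le_mul h

theorem left_ne_zero_of_mul (h : x * y ≠ 0) : x ≠ 0 := by
  rintro rfl; exact h (zero_mul y)

theorem eq_zero_of_le_zero (h : x ≤ 0) : x = 0 := by
  rwa [le_iff, zero_mul] at h

end InverseMeetSemigroup

open InverseMeetSemigroup in
theorem lenzArrow_mul_right_general (a b c : S) (hab : LenzArrow a b) : LenzArrow (a * c) (b * c) := by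
  intro x hx hxac
  have hxc : x * c⁻¹ * c = x := mul_inv_mul_of_le_mul hxac
  have hxa : x * c⁻¹ ≤ a := (mul_le_mul_right hxac c⁻¹).trans (mul_mul_inv_le a c)
  set z := x * c⁻¹ ⊓ b
  have hz : z ≠ 0 := hab _ (left_ne_zero_of_mul (y := c) (by rwa [hxc])) hxa
  have hzc : z * c ≠ 0 := left_ne_zero_of_mul (y := c⁻¹) <| by
    rwa [mul_mul_inv_of_le_mul_inv (inf_le_left : z ≤ x * c⁻¹)]
  have hzcx : z * c ≤ x := hxc ▸ mul_le_mul_right inf_le_left c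
  exact fun h => hzc (eq_zero_of_le_zero (h ▸ le_inf hzcx (mul_le_mul_right inf_le_right c)))

/-- The Lenz arrow is compatible with right multiplication. -/
theorem lenzArrow_mul_right (a b c : S) (hab : LenzArrow a b)
    (hac : a * c ≠ 0) (hbc : b * c ≠ 0) : LenzArrow (a * c) (b * c) :=
  lenzArrow_mul_right_general a b c hab
end

section
/- An inverse ∧-semigroup S with zero is separative (i.e., a ↔ b implies a = b) if and only if for all a, b ∈ S, a ≤ b ⇔ a → b. -/
variable {S : Type*} [InverseMeetSemigroup S]

theorem LenzArrow.of_le {a b : S} (hab : a ≤ b) : LenzArrow a b := by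
  intro x hx hxa
  rwa [inf_eq_left.mpr (hxa.trans hab)]

theorem LenzArrow.inf_right {a b : S} (hab : LenzArrow a b) : LenzArrow a (a ⊓ b) := by
  intro x hx hxa
  rw [← inf_assoc, inf_eq_left.mpr hxa]
  exact hab x hx hxa

/-- `S` is separative (`a ↔ b` implies `a = b`) iff for all `a b`,
`a ≤ b ⇔ a → b`. -/
theorem separative_iff (S : Type*) [InverseMeetSemigroup S] :
    (∀ a b : S, LenzArrow a b → LenzArrow b a → a = b) ↔
      (∀ a b : S, a ≤ b ↔ LenzArrow a b) := by
  constructor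
  · intro hsep a b
    refine ⟨LenzArrow.of_le, fun hab => ?_⟩
    rw [hsep a (a ⊓ b) hab.inf_right (LenzArrow.of_le inf_le_left)]
    exact inf_le_right
  · intro hle a b hab hba
    exact le_antisymm ((hle a b).mpr hab) ((hle b a).mpr hba)
end

section
/- Every ultrafilter in an inverse ∧-semigroup with zero is a tight filter. -/
variable {S : Type*} [InverseMeetSemigroup S]

/-- A filter: a nonempty, downward directed, upward closed subset not containing `0`. -/
def IsFilt (F : Set S) : Prop :=
  F.Nonempty ∧ (0 : S) ∉ F ∧
  (∀ x ∈ F, ∀ y : S, x ≤ y → y ∈ F) ∧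
  (∀ x ∈ F, ∀ y ∈ F, ∃ z ∈ F, z ≤ x ∧ z ≤ y)

/-- An ultrafilter: a maximal filter. -/
def IsUltra (F : Set S) : Prop :=
  IsFilt F ∧ ∀ G : Set S, IsFilt G → F ⊆ G → G = F

/-- A finite subset of `a↓` is a cover of `a` if every nonzero `x ≤ a`
meets some element of it. -/
def IsCover (A : Finset S) (a : S) : Prop :=
  (∀ x ∈ A, x ≤ a) ∧ ∀ x : S, x ≠ 0 → x ≤ a → ∃ y ∈ A, x ⊓ y ≠ 0

/-- A filter is tight if it meets every finite cover of each of its elements. -/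
def IsTight (F : Set S) : Prop :=
  IsFilt F ∧ ∀ a ∈ F, ∀ A : Finset S, IsCover A a → ∃ y ∈ A, y ∈ F

/-!
If an ultrafilter `F` missed every member of a cover `{a₁, …, aₘ}` of some `a ∈ F`, maximality
would give, for each `i`, some `xᵢ ∈ F` with `xᵢ ∧ aᵢ = 0`: otherwise the upward closure of
`{x ∧ aᵢ | x ∈ F}` is a filter containing `F`. A common lower bound `z ∈ F` of `a, x₁, …, xₘ` is
then a nonzero element below `a` meeting no `aᵢ`, contradicting the cover.
-/

theorem InverseMeetSemigroup.eq_zero_of_le_zero_s14 {w : S} (h : w ≤ 0) : w = 0 := by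
  rw [InverseMeetSemigroup.le_iff] at h
  rw [h, InverseMeetSemigroup.zero_mul]

theorem inf_eq_zero_of_le_of_inf_eq_zero {x x' y : S} (hx : x' ≤ x) (h : x ⊓ y = 0) :
    x' ⊓ y = 0 :=
  InverseMeetSemigroup.eq_zero_of_le_zero_s14 (h ▸ inf_le_inf_right y hx)

namespace IsFilt

theorem ne_zero {F : Set S} (hF : IsFilt F) {x : S} (hx : x ∈ F) : x ≠ 0 :=
  fun h => hF.2.1 (h ▸ hx)

theorem isFilt_inf_upperClosure {F : Set S} (hF : IsFilt F) (y : S) (hy : ∀ x ∈ F, x ⊓ y ≠ 0) :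
    IsFilt {g | ∃ x ∈ F, x ⊓ y ≤ g} := by
  obtain ⟨⟨a, ha⟩, -, -, hdir⟩ := hF
  refine ⟨⟨a, a, ha, inf_le_left⟩, ?_, ?_, ?_⟩
  · rintro ⟨x, hx, hle⟩
    exact hy x hx (InverseMeetSemigroup.eq_zero_of_le_zero_s14 hle)
  · rintro g ⟨x, hx, hle⟩ g' hgg'
    exact ⟨x, hx, hle.trans hgg'⟩
  · rintro g ⟨x, hx, hle⟩ g' ⟨x', hx', hle'⟩
    obtain ⟨z, hz, hzx, hzx'⟩ := hdir x hx x' hx'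
    exact ⟨z ⊓ y, ⟨z, hz, le_rfl⟩, (inf_le_inf_right y hzx).trans hle,
      (inf_le_inf_right y hzx').trans hle'⟩

theorem exists_le_forall_inf_eq_zero {F : Set S} (hF : IsFilt F) {a : S} (ha : a ∈ F)
    (B : Finset S) (hB : ∀ y ∈ B, ∃ x ∈ F, x ⊓ y = 0) :
    ∃ z ∈ F, z ≤ a ∧ ∀ y ∈ B, z ⊓ y = 0 := by
  classical
  induction B using Finset.induction_on with
  | empty => exact ⟨a, ha, le_rfl, by simp⟩
  | insert b B _ ih =>
    obtain ⟨z, hzF, hza, hzB⟩ := ih fun y hy => hB y (Finset.mem_insert_of_mem hy)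
    obtain ⟨x, hxF, hxb⟩ := hB b (Finset.mem_insert_self b B)
    obtain ⟨w, hwF, hwz, hwx⟩ := hF.2.2.2 z hzF x hxF
    refine ⟨w, hwF, hwz.trans hza, ?_⟩
    rintro y hy
    rcases Finset.mem_insert.mp hy with rfl | hy
    · exact inf_eq_zero_of_le_of_inf_eq_zero hwx hxb
    · exact inf_eq_zero_of_le_of_inf_eq_zero hwz (hzB y hy)

end IsFilt

theorem IsUltra.exists_inf_eq_zero_of_notMem {F : Set S} (hF : IsUltra F) {y : S}
    (hy : y ∉ F) : ∃ x ∈ F, x ⊓ y = 0 := by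
  by_contra! hmeet
  obtain ⟨a, ha⟩ := hF.1.1
  have hG : {g | ∃ x ∈ F, x ⊓ y ≤ g} = F :=
    hF.2 _ (hF.1.isFilt_inf_upperClosure y hmeet) fun x hx => ⟨x, hx, inf_le_left⟩
  exact hy (hG ▸ ⟨a, ha, inf_le_right⟩)

/-- Every ultrafilter is a tight filter. -/
theorem ultra_isTight (F : Set S) (hF : IsUltra F) : IsTight F := by
  refine ⟨hF.1, fun a ha A hA => ?_⟩
  by_contra! hmiss
  obtain ⟨z, hzF, hza, hzA⟩ := hF.1.exists_le_forall_inf_eq_zero ha A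
    fun y hy => hF.exists_inf_eq_zero_of_notMem (hmiss y hy)
  obtain ⟨y, hyA, hzy⟩ := hA.2 z (hF.1.ne_zero hzF) hza
  exact hzy (hzA y hyA)
end

section
/- Every E*-unitary inverse semigroup with zero is an inverse ∧-semigroup: any two elements have a meet with respect to the natural partial order. -/
/-- An inverse semigroup with zero, equipped with its natural partial order:
`a ≤ b ↔ a = b * (a⁻¹ * a)`. -/
class InverseZeroSemigroup (S : Type*) extends Semigroup S, Zero S, Inv S, PartialOrder S where
  mul_inv_mul : ∀ a : S, a * a⁻¹ * a = a
  inv_mul_inv : ∀ a : S, a⁻¹ * a * a⁻¹ = a⁻¹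
  idem_comm : ∀ e f : S, e * e = e → f * f = f → e * f = f * e
  zero_mul : ∀ a : S, (0 : S) * a = 0
  mul_zero : ∀ a : S, a * (0 : S) = 0
  le_iff : ∀ a b : S, a ≤ b ↔ a = b * (a⁻¹ * a)

/-!
If `a` and `b` have a nonzero common lower bound `c`, then `c * c⁻¹ ≤ a * b⁻¹` by compatibility
of the natural order with multiplication and inversion, so `E*`-unitarity makes `a * b⁻¹` an
idempotent. Then `a * b⁻¹ * b` lies below both `a` and `b`, and every common lower bound
`d = d * d⁻¹ * d` lies below it, again by compatibility. Otherwise `0` is the meet.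
-/

namespace InverseZeroSemigroup

variable {S : Type*} [InverseZeroSemigroup S]

theorem isIdempotentElem_inv_mul (a : S) : IsIdempotentElem (a⁻¹ * a) := by
  rw [IsIdempotentElem, ← mul_assoc, inv_mul_inv]

theorem isIdempotentElem_mul_inv (a : S) : IsIdempotentElem (a * a⁻¹) := by
  rw [IsIdempotentElem, ← mul_assoc, mul_inv_mul]

theorem inv_eq_of_mul_mul {a x : S} (hax : a * x * a = a) (hxa : x * a * x = x) : a⁻¹ = x := by
  have hxa' : IsIdempotentElem (x * a) := by rw [IsIdempotentElem, ← mul_assoc, hxa]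
  have hax' : IsIdempotentElem (a * x) := by rw [IsIdempotentElem, ← mul_assoc, hax]
  have hx : x = a⁻¹ * a * x :=
    calc x = x * (a * a⁻¹ * a) * x := by rw [mul_inv_mul, hxa]
      _ = (x * a) * (a⁻¹ * a) * x := by simp only [mul_assoc]
      _ = (a⁻¹ * a) * (x * a) * x := by rw [idem_comm _ _ hxa' (isIdempotentElem_inv_mul a)]
      _ = a⁻¹ * a * x := by rw [mul_assoc (a⁻¹ * a), hxa]
  have hinv : a⁻¹ = a⁻¹ * a * x :=
    calc a⁻¹ = a⁻¹ * (a * x * a) * a⁻¹ := by rw [hax, inv_mul_inv]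
      _ = a⁻¹ * ((a * x) * (a * a⁻¹)) := by simp only [mul_assoc]
      _ = a⁻¹ * ((a * a⁻¹) * (a * x)) := by rw [idem_comm _ _ hax' (isIdempotentElem_mul_inv a)]
      _ = a⁻¹ * a * x := by simp only [← mul_assoc, inv_mul_inv]
  rw [hinv, ← hx]

theorem mul_inv_rev (a b : S) : (a * b)⁻¹ = b⁻¹ * a⁻¹ := by
  apply inv_eq_of_mul_mul
  · calc a * b * (b⁻¹ * a⁻¹) * (a * b) = a * ((b * b⁻¹) * (a⁻¹ * a)) * b := by
          simp only [mul_assoc]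
      _ = a * ((a⁻¹ * a) * (b * b⁻¹)) * b := by
          rw [idem_comm _ _ (isIdempotentElem_mul_inv b) (isIdempotentElem_inv_mul a)]
      _ = (a * a⁻¹ * a) * (b * b⁻¹ * b) := by simp only [mul_assoc]
      _ = a * b := by rw [mul_inv_mul, mul_inv_mul]
  · calc b⁻¹ * a⁻¹ * (a * b) * (b⁻¹ * a⁻¹) = b⁻¹ * ((a⁻¹ * a) * (b * b⁻¹)) * a⁻¹ := by
          simp only [mul_assoc]
      _ = b⁻¹ * ((b * b⁻¹) * (a⁻¹ * a)) * a⁻¹ := by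
          rw [idem_comm _ _ (isIdempotentElem_inv_mul a) (isIdempotentElem_mul_inv b)]
      _ = (b⁻¹ * b * b⁻¹) * (a⁻¹ * a * a⁻¹) := by simp only [mul_assoc]
      _ = b⁻¹ * a⁻¹ := by rw [inv_mul_inv, inv_mul_inv]

theorem _root_.IsIdempotentElem.inv_eq_self {e : S} (he : IsIdempotentElem e) : e⁻¹ = e :=
  inv_eq_of_mul_mul (by rw [he.eq, he.eq]) (by rw [he.eq, he.eq])

theorem zero_le (a : S) : 0 ≤ a := by
  rw [le_iff, IsIdempotentElem.inv_eq_self (mul_zero (0 : S)), mul_zero, mul_zero]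

theorem mul_inv_ne_zero {a : S} (ha : a ≠ 0) : a * a⁻¹ ≠ 0 := by
  contrapose! ha
  rw [← mul_inv_mul a, ha, zero_mul]

theorem mul_le_of_isIdempotentElem_right {f : S} (hf : IsIdempotentElem f) (b : S) :
    b * f ≤ b := by
  rw [le_iff, mul_inv_rev, hf.inv_eq_self]
  calc b * f = b * (b⁻¹ * b) * (f * f) := by rw [hf.eq, ← mul_assoc b, mul_inv_mul]
    _ = b * ((b⁻¹ * b) * f) * f := by simp only [mul_assoc]
    _ = b * (f * (b⁻¹ * b)) * f := by rw [idem_comm _ _ (isIdempotentElem_inv_mul b) hf]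
    _ = b * (f * b⁻¹ * (b * f)) := by simp only [mul_assoc]

theorem mul_le_of_isIdempotentElem_left {e : S} (he : IsIdempotentElem e) (b : S) :
    e * b ≤ b := by
  rw [le_iff, mul_inv_rev, he.inv_eq_self]
  calc e * b = e * (b * b⁻¹) * b := by rw [mul_assoc e, mul_inv_mul]
    _ = b * b⁻¹ * (e * e) * b := by rw [idem_comm _ _ he (isIdempotentElem_mul_inv b), he.eq]
    _ = b * (b⁻¹ * e * (e * b)) := by simp only [mul_assoc]

theorem eq_mul_inv_mul_of_le {a b : S} (h : a ≤ b) : a = a * a⁻¹ * b := by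
  have he := isIdempotentElem_inv_mul a
  rw [le_iff] at h
  rw [h, mul_inv_rev, he.inv_eq_self]
  calc b * (a⁻¹ * a) = b * (b⁻¹ * b) * (a⁻¹ * a) := by rw [← mul_assoc b b⁻¹ b, mul_inv_mul]
    _ = b * ((a⁻¹ * a) * (a⁻¹ * a) * (b⁻¹ * b)) := by
      rw [mul_assoc, idem_comm _ _ (isIdempotentElem_inv_mul b) he, he.eq]
    _ = b * (a⁻¹ * a) * ((a⁻¹ * a) * b⁻¹) * b := by simp only [mul_assoc]

theorem inv_le_inv {a b : S} (h : a ≤ b) : a⁻¹ ≤ b⁻¹ := by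
  rw [le_iff] at h
  rw [h, mul_inv_rev, (isIdempotentElem_inv_mul a).inv_eq_self]
  exact mul_le_of_isIdempotentElem_left (isIdempotentElem_inv_mul a) b⁻¹

theorem mul_le_mul_right {a b : S} (h : a ≤ b) (c : S) : a * c ≤ b * c := by
  rw [eq_mul_inv_mul_of_le h, mul_assoc]
  exact mul_le_of_isIdempotentElem_left (isIdempotentElem_mul_inv a) (b * c)

theorem mul_le_mul_left {a b : S} (h : a ≤ b) (c : S) : c * a ≤ c * b := by
  rw [le_iff] at h
  rw [h, ← mul_assoc]
  exact mul_le_of_isIdempotentElem_right (isIdempotentElem_inv_mul a) (c * b)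

theorem mul_le_mul {a b c d : S} (hab : a ≤ b) (hcd : c ≤ d) : a * c ≤ b * d :=
  (mul_le_mul_right hab c).trans (mul_le_mul_left hcd b)

theorem mul_inv_mul_le_left (a b : S) : a * b⁻¹ * b ≤ a := by
  rw [mul_assoc]
  exact mul_le_of_isIdempotentElem_right (isIdempotentElem_inv_mul b) a

theorem le_mul_inv_mul {a b c : S} (hca : c ≤ a) (hcb : c ≤ b) : c ≤ a * b⁻¹ * b := by
  rw [← mul_inv_mul c]
  exact mul_le_mul (mul_le_mul hca (inv_le_inv hcb)) hcb

variable (S) in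
def EStarUnitary : Prop :=
  ∀ e s : S, e ≠ 0 → e * e = e → e ≤ s → s * s = s

theorem EStarUnitary.isIdempotentElem_mul_inv (hS : EStarUnitary S) {a b c : S} (hca : c ≤ a)
    (hcb : c ≤ b) (hc : c ≠ 0) : IsIdempotentElem (a * b⁻¹) :=
  hS _ _ (mul_inv_ne_zero hc) (InverseZeroSemigroup.isIdempotentElem_mul_inv c)
    (mul_le_mul hca (inv_le_inv hcb))

end InverseZeroSemigroup

/-- Every `E*`-unitary inverse semigroup with zero is an inverse
∧-semigroup: any two elements have a greatest lower bound with respect to the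
natural partial order. -/
theorem eStarUnitary_has_meets {S : Type*} [InverseZeroSemigroup S]
    (hE : ∀ e s : S, e ≠ 0 → e * e = e → e ≤ s → s * s = s) :
    ∀ a b : S, ∃ m : S, m ≤ a ∧ m ≤ b ∧ ∀ c : S, c ≤ a → c ≤ b → c ≤ m := by
  open InverseZeroSemigroup in
  intro a b
  by_cases h : ∃ c, c ≤ a ∧ c ≤ b ∧ c ≠ 0
  · obtain ⟨c, hca, hcb, hc⟩ := h
    refine ⟨a * b⁻¹ * b, mul_inv_mul_le_left a b, ?_, fun d hda hdb => le_mul_inv_mul hda hdb⟩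
    exact mul_le_of_isIdempotentElem_left (EStarUnitary.isIdempotentElem_mul_inv hE hca hcb hc) b
  · push Not at h
    exact ⟨0, zero_le a, zero_le b, fun c hca hcb => (h c hca hcb).le⟩
end
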